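/- Let E_1 be the two-dimensional complex evolution algebra with structural matrix ((1,0),(0,0)) (i.e. e₁e₁ = e₁, e₂e₂ = 0). A linear map P : ℂ² → ℂ² is a Rota–Baxter operator of weight 0 on E_1 if and only if there exist b, d ∈ ℂ with P(e₁) = b e₂ and P(e₂) = d e₂ (i.e. P has matrix ((0,b),(0,d))). -/

import Mathlib

/-- The evolution-algebra product on `ℂ²` determined by a structural matrix `A`:
`e_i · e_i = a_{i1} e₁ + a_{i2} e₂` and `e₁ · e₂ = e₂ · e₁ = 0`. -/
noncomputable def evMulC (A : Matrix (Fin 2) (Fin 2) ℂ) (x y : Fin 2 → ℂ) : Fin 2 → ℂ :=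
  fun k => x 0 * y 0 * A 0 k + x 1 * y 1 * A 1 k

/-- `P` is a Rota–Baxter operator of weight `lam` on the evolution algebra with structural
matrix `A`: `P(x)·P(y) = P(x·P(y) + P(x)·y + lam x·y)` for all `x, y`. -/
def IsRotaBaxter (A : Matrix (Fin 2) (Fin 2) ℂ) (lam : ℂ)
    (P : (Fin 2 → ℂ) →ₗ[ℂ] (Fin 2 → ℂ)) : Prop :=
  ∀ x y : Fin 2 → ℂ,
    evMulC A (P x) (P y) = P (evMulC A x (P y) + evMulC A (P x) y + lam • evMulC A x y)

/-! In `E₁` the product is `x · y = x₀ y₀ e₁`; write `a = P(e₁)₀` and `c = P(e₂)₀`. Taking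
`x = y = e₁` in the Rota–Baxter identity gives `a² e₁ = 2a P(e₁)`, whose first coordinate forces
`a = 0`; taking `x = y = e₂` gives `c² e₁ = P(0) = 0`, so `c = 0`. Conversely, if the first
coordinate of every `P x` vanishes, every product occurring in the identity is zero. -/

theorem LinearMap.apply_vec2 {R M : Type*} [CommSemiring R] [AddCommMonoid M] [Module R M]
    (f : (Fin 2 → R) →ₗ[R] M) (x : Fin 2 → R) :
    f x = x 0 • f ![1, 0] + x 1 • f ![0, 1] := by
  conv_lhs => rw [show x = x 0 • ![1, 0] + x 1 • ![0, 1] by ext i; fin_cases i <;> simp]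
  rw [map_add, map_smul, map_smul]

theorem exists_eq_vec2_zero_iff {α : Type*} [Zero α] (v : Fin 2 → α) :
    (∃ b, v = ![0, b]) ↔ v 0 = 0 := by
  refine ⟨fun ⟨b, hb⟩ => by simp [hb], fun h => ⟨v 1, ?_⟩⟩
  ext i; fin_cases i <;> simp [h]

local notation "E₁" => (!![1, 0; 0, 0] : Matrix (Fin 2) (Fin 2) ℂ)

theorem evMulC_E₁ (x y : Fin 2 → ℂ) : evMulC E₁ x y = (x 0 * y 0) • ![1, 0] := by
  ext k; fin_cases k <;> simp [evMulC]

theorem isRotaBaxter_E₁_zero_iff (P : (Fin 2 → ℂ) →ₗ[ℂ] (Fin 2 → ℂ)) :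
    IsRotaBaxter E₁ 0 P ↔ P ![1, 0] 0 = 0 ∧ P ![0, 1] 0 = 0 := by
  simp only [IsRotaBaxter, evMulC_E₁, zero_smul, add_zero, ← add_smul, map_smul]
  constructor
  · intro h
    have he₁ := congrFun (h ![1, 0] ![1, 0]) 0
    have he₂ := congrFun (h ![0, 1] ![0, 1]) 0
    simp only [Pi.smul_apply, smul_eq_mul, Matrix.cons_val_zero, one_mul, zero_mul, mul_one]
      at he₁ he₂
    exact ⟨eq_zero_of_pow_eq_zero (n := 2) (by linear_combination -he₁),
      eq_zero_of_pow_eq_zero (n := 2) (by linear_combination he₂)⟩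
  · rintro ⟨ha, hc⟩ x y
    have hP : ∀ z, P z 0 = 0 := fun z => by simp [P.apply_vec2 z, ha, hc]
    simp [hP]

/-- Rota–Baxter operators of weight 0 on `E₁` (`e₁e₁ = e₁`) are exactly those
with matrix `((0,b),(0,d))`. -/
theorem rb_weight0_E1 (P : (Fin 2 → ℂ) →ₗ[ℂ] (Fin 2 → ℂ)) :
    IsRotaBaxter !![1, 0; 0, 0] 0 P ↔
      ∃ b d : ℂ, P ![1, 0] = ![0, b] ∧ P ![0, 1] = ![0, d] := by
  rw [isRotaBaxter_E₁_zero_iff, ← exists_eq_vec2_zero_iff, ← exists_eq_vec2_zero_iff]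
  simp only [exists_and_left, exists_and_right]
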